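/- If the Hermite coefficient φ̂(n) := E[φ(J)·h_n(J)] of φ(J) := σ_i σ_j is nonzero, then |E(n)| ≥ min{ d(i,j), d(i,B)+d(j,B) }, where d is the graph distance on G and d(i,B) := min{d(i,k) : k ∈ B} (taken to be +∞ if B = ∅). -/

import Mathlib

open MeasureTheory ProbabilityTheory Real Finset

namespace EA

/-- Environments: edge weights indexed by unordered pairs of vertices. -/
abbrev Env (V : Type) := Sym2 V → ℝ

/-- The product `σ i * σ j` over an unordered pair `{i, j}`. -/
def spinProd {V : Type} (σ : V → ℝ) : Sym2 V → ℝ :=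
  Sym2.lift ⟨fun i j => σ i * σ j, fun _ _ => mul_comm _ _⟩

/-- The Edwards–Anderson Hamiltonian. -/
noncomputable def ham {V : Type} [Fintype V] [DecidableEq V]
    (G : SimpleGraph V) [DecidableRel G.Adj] (J : Env V) (σ : V → ℝ) : ℝ :=
  -∑ e ∈ G.edgeFinset, J e * spinProd σ e

/-- Spin configurations take values ±1. -/
def IsConfig {V : Type} (σ : V → ℝ) : Prop := ∀ i, σ i = 1 ∨ σ i = -1

/-- Satisfying the boundary condition `γ` on `B`. -/
def SatisfiesBC {V : Type} (B : Finset V) (γ : V → ℝ) (σ : V → ℝ) : Prop :=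
  ∀ i ∈ B, σ i = γ i

/-- Ground state: minimizer of the Hamiltonian under the boundary condition. -/
def IsGroundState {V : Type} [Fintype V] [DecidableEq V]
    (G : SimpleGraph V) [DecidableRel G.Adj] (B : Finset V) (γ : V → ℝ)
    (J : Env V) (σ : V → ℝ) : Prop :=
  IsConfig σ ∧ SatisfiesBC B γ σ ∧
    ∀ τ : V → ℝ, IsConfig τ → SatisfiesBC B γ τ → ham G J σ ≤ ham G J τ

/-- i.i.d. standard Gaussian environment. -/
noncomputable def gaussEnv (V : Type) [Fintype V] [DecidableEq V] : Measure (Env V) :=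
  Measure.pi fun _ : Sym2 V => gaussianReal 0 1

instance (V : Type) [Fintype V] [DecidableEq V] : IsProbabilityMeasure (gaussEnv V) := by
  unfold gaussEnv; infer_instance

/-- Bernoulli(p) measure on `Bool`. -/
noncomputable def bern (p : ℝ) : Measure Bool :=
  (PMF.bernoulli (min (Real.toNNReal p) 1) (min_le_right _ _)).toMeasure

instance (p : ℝ) : IsProbabilityMeasure (bern p) := by
  unfold bern; infer_instance

/-- Joint law of `(J, J', coin flips)`. -/
noncomputable def μ3 (V : Type) [Fintype V] [DecidableEq V] (p : ℝ) :
    Measure (Env V × Env V × (Sym2 V → Bool)) :=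
  (gaussEnv V).prod ((gaussEnv V).prod (Measure.pi fun _ : Sym2 V => bern p))

/-- Joint law of `(J, J')`. -/
noncomputable def μ2 (V : Type) [Fintype V] [DecidableEq V] : Measure (Env V × Env V) :=
  (gaussEnv V).prod (gaussEnv V)

/-- Perturbation of the first kind. -/
noncomputable def perturb1 {V : Type} (p : ℝ) (J J' : Env V) : Env V :=
  fun e => (1 - p) * J e + Real.sqrt (2 * p - p ^ 2) * J' e

/-- Perturbation of the second kind. -/
def perturb2 {V : Type} (J J' : Env V) (ε : Sym2 V → Bool) : Env V :=
  fun e => if ε e then J' e else J e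

/-- Site overlap over interior vertices. -/
noncomputable def overlap {V : Type} [Fintype V] [DecidableEq V]
    (B : Finset V) (σ τ : V → ℝ) : ℝ :=
  (∑ i ∈ univ \ B, σ i * τ i) / (univ \ B).card

/-- `min{d(i,j), d(i,B)+d(j,B)}` (the latter term omitted when `B = ∅`). -/
noncomputable def minDist {V : Type} (G : SimpleGraph V) (B : Finset V) (i j : V) : ℕ :=
  if h : B.Nonempty then
    min (G.dist i j) ((B.inf' h fun k => G.dist i k) + B.inf' h fun k => G.dist j k)
  else G.dist i j

open Classical in
/-- Edge boundary of `A`: edges with one endpoint in `A` and the other outside. -/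
noncomputable def edgeBdry {V : Type} [Fintype V] [DecidableEq V]
    (G : SimpleGraph V) [DecidableRel G.Adj] (A : Finset V) : Finset (Sym2 V) :=
  G.edgeFinset.filter fun e => ∃ i ∈ e, ∃ j ∈ e, i ∈ A ∧ j ∉ A

/-- Flip the spins on `A`. -/
def flipOn {V : Type} [DecidableEq V] (A : Finset V) (σ : V → ℝ) : V → ℝ :=
  fun i => if i ∈ A then -σ i else σ i


/-- Normalized Hermite function `h_m`. -/
noncomputable def hermiteFn (m : ℕ) (x : ℝ) : ℝ :=
  Polynomial.aeval x (Polynomial.hermite m) / Real.sqrt (Nat.factorial m)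

/-- Product Hermite polynomial `h_n(J)` for a multi-index `n`. -/
noncomputable def hermiteProd {V : Type} [Fintype V] [DecidableEq V]
    (G : SimpleGraph V) [DecidableRel G.Adj] (n : Sym2 V → ℕ) (J : Env V) : ℝ :=
  ∏ e ∈ G.edgeFinset, hermiteFn (n e) (J e)

/-- `E(n)`: the set of edges with positive index. -/
def suppEdges {V : Type} [Fintype V] [DecidableEq V]
    (G : SimpleGraph V) [DecidableRel G.Adj] (n : Sym2 V → ℕ) : Finset (Sym2 V) :=
  G.edgeFinset.filter fun e => 0 < n e

/-- `G(n)`: the graph spanned by the edges of `E(n)`. -/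
def suppGraph {V : Type} [Fintype V] [DecidableEq V]
    (G : SimpleGraph V) [DecidableRel G.Adj] (n : Sym2 V → ℕ) : SimpleGraph V :=
  SimpleGraph.fromEdgeSet (↑(suppEdges G n))


/-! ### Auxiliary machinery -/

section Aux

open scoped ENNReal NNReal

variable {V : Type} [Fintype V] [DecidableEq V]

lemma spinProd_mk (σ : V → ℝ) (u v : V) : spinProd σ s(u, v) = σ u * σ v := rfl

/-- Spin configuration from a boolean configuration. -/
noncomputable def toSpin (s : V → Bool) : V → ℝ := fun v => if s v then 1 else -1

lemma exists_toSpin {σ : V → ℝ} (h : IsConfig σ) : ∃ s : V → Bool, toSpin s = σ := by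
  refine ⟨fun v => decide (0 < σ v), funext fun v => ?_⟩
  rcases h v with h1 | h1 <;> rw [toSpin] <;> rw [h1] <;> norm_num

/-- A hyperplane with at least one nonzero coefficient is null for the Gaussian environment. -/
lemma gauss_null_hyperplane (c : Sym2 V → ℝ) (a : ℝ) (s : Finset (Sym2 V)) (e0 : Sym2 V)
    (he0 : e0 ∈ s) (hc : c e0 ≠ 0) :
    gaussEnv V {J : Env V | ∑ e ∈ s, c e * J e = a} = 0 := by
  classical
  have hmeas : MeasurableSet {J : Env V | ∑ e ∈ s, c e * J e = a} := by
    have h1 : Measurable fun J : Env V => ∑ e ∈ s, c e * J e :=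
      Finset.measurable_sum _ fun e _ => (measurable_pi_apply e).const_mul _
    exact h1 (measurableSet_singleton a)
  have hind : Measurable
      (Set.indicator {J : Env V | ∑ e ∈ s, c e * J e = a} (1 : Env V → ℝ≥0∞)) :=
    measurable_const.indicator hmeas
  rw [← lintegral_indicator_one hmeas]
  unfold gaussEnv
  rw [lintegral_eq_lmarginal_univ (fun _ : Sym2 V => (0 : ℝ))]
  rw [lmarginal_erase' _ hind (Finset.mem_univ e0)]
  have hzero : (fun x : Env V => ∫⁻ y,
      Set.indicator {J : Env V | ∑ e ∈ s, c e * J e = a} (1 : Env V → ℝ≥0∞)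
        (Function.update x e0 y) ∂(gaussianReal 0 1)) = fun _ => 0 := by
    funext x
    have hupd : ∀ y : ℝ, (Function.update x e0 y ∈ {J : Env V | ∑ e ∈ s, c e * J e = a})
        ↔ y = (a - ∑ e ∈ s.erase e0, c e * x e) / c e0 := by
      intro y
      have hsum : ∑ e ∈ s, c e * Function.update x e0 y e
          = c e0 * y + ∑ e ∈ s.erase e0, c e * x e := by
        rw [← Finset.add_sum_erase s _ he0]
        congr 1
        · rw [Function.update_self]
        · exact Finset.sum_congr rfl fun e he =>
            (by rw [Function.update_of_ne (Finset.ne_of_mem_erase he)])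
      simp only [Set.mem_setOf_eq, hsum]
      rw [eq_div_iff hc]
      constructor
      · intro h; linarith [h]
      · intro h; linarith [h]
    have : (fun y : ℝ => Set.indicator {J : Env V | ∑ e ∈ s, c e * J e = a}
        (1 : Env V → ℝ≥0∞) (Function.update x e0 y))
        = Set.indicator {(a - ∑ e ∈ s.erase e0, c e * x e) / c e0} (1 : ℝ → ℝ≥0∞) := by
      funext y
      by_cases hy : y = (a - ∑ e ∈ s.erase e0, c e * x e) / c e0
      · rw [Set.indicator_of_mem ((hupd y).mpr hy), Set.indicator_of_mem (by simpa using hy)]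
        rfl
      · rw [Set.indicator_of_notMem (fun hmem => hy ((hupd y).mp hmem)),
          Set.indicator_of_notMem (by simpa using hy)]
    rw [this, lintegral_indicator_one (measurableSet_singleton _)]
    exact (gaussianReal_absolutelyContinuous 0 one_ne_zero) (measure_singleton _)
  rw [hzero]
  simp [lmarginal]

/-- Flip the signs of the environment on a set of edges. -/
def flipEnv (F : Finset (Sym2 V)) (J : Env V) : Env V := fun e => if e ∈ F then -J e else J e

lemma flipEnv_involutive (F : Finset (Sym2 V)) : Function.Involutive (flipEnv (V := V) F) := by
  intro J
  funext e
  by_cases h : e ∈ F <;> simp [flipEnv, h]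

lemma measurable_flipEnv (F : Finset (Sym2 V)) : Measurable (flipEnv (V := V) F) := by
  rw [measurable_pi_iff]
  intro e
  by_cases h : e ∈ F <;> simp only [flipEnv, h, if_true, if_false]
  · exact (measurable_pi_apply e).neg
  · exact measurable_pi_apply e

lemma measurePreserving_flipEnv (F : Finset (Sym2 V)) :
    MeasurePreserving (flipEnv F) (gaussEnv V) (gaussEnv V) := by
  have key : MeasurePreserving (fun (J : Env V) (e : Sym2 V) =>
      (fun x : ℝ => if e ∈ F then -x else x) (J e)) (gaussEnv V) (gaussEnv V) := by
    unfold gaussEnv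
    refine measurePreserving_pi (f := fun (e : Sym2 V) (x : ℝ) => if e ∈ F then -x else x)
      (fun _ : Sym2 V => gaussianReal 0 1)
      (fun _ : Sym2 V => gaussianReal 0 1) fun e => ?_
    by_cases h : e ∈ F
    · simp only [h, if_true]
      refine ⟨measurable_neg, ?_⟩
      have h1 : (fun x : ℝ => -x) = (fun x : ℝ => (-1 : ℝ) * x) := by funext x; ring
      rw [h1]
      rw [show (fun x : ℝ => (-1 : ℝ) * x) = ((-1 : ℝ) * ·) from rfl]
      rw [gaussianReal_map_const_mul]
      norm_num
    · simp only [h, if_false]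
      exact MeasurePreserving.id _
  exact key

/-- `flipEnv` as a measurable equivalence. -/
noncomputable def flipEquiv (F : Finset (Sym2 V)) : Env V ≃ᵐ Env V where
  toEquiv := (flipEnv_involutive F).toPerm _
  measurable_toFun := measurable_flipEnv F
  measurable_invFun := measurable_flipEnv F

lemma integral_flipEnv (F : Finset (Sym2 V)) (g : Env V → ℝ) :
    ∫ J, g (flipEnv F J) ∂(gaussEnv V) = ∫ J, g J ∂(gaussEnv V) :=
  (measurePreserving_flipEnv F).integral_comp (flipEquiv F).measurableEmbedding g

lemma mem_edgeBdry_mk {G : SimpleGraph V} [DecidableRel G.Adj] {A : Finset V} {u v : V}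
    (he : s(u, v) ∈ G.edgeFinset) :
    s(u, v) ∈ edgeBdry G A ↔ ((u ∈ A ∧ v ∉ A) ∨ (v ∈ A ∧ u ∉ A)) := by
  classical
  simp only [edgeBdry, Finset.mem_filter, he, true_and, Sym2.mem_iff]
  constructor
  · rintro ⟨x, (rfl | rfl), y, (rfl | rfl), hx, hy⟩ <;> tauto
  · rintro (⟨h1, h2⟩ | ⟨h1, h2⟩)
    · exact ⟨u, Or.inl rfl, v, Or.inr rfl, h1, h2⟩
    · exact ⟨v, Or.inr rfl, u, Or.inl rfl, h1, h2⟩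

lemma ham_flip (G : SimpleGraph V) [DecidableRel G.Adj] (A : Finset V) (J : Env V) (σ : V → ℝ) :
    ham G (flipEnv (edgeBdry G A) J) (flipOn A σ) = ham G J σ := by
  unfold ham
  congr 1
  refine Finset.sum_congr rfl ?_
  intro e he
  induction e using Sym2.ind with
  | _ u v =>
    have hmem := mem_edgeBdry_mk (A := A) he
    by_cases hu : u ∈ A <;> by_cases hv : v ∈ A
    · have hnb : s(u, v) ∉ edgeBdry G A := fun hx => by
        rcases hmem.mp hx with ⟨_, h2⟩ | ⟨_, h2⟩
        · exact h2 hv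
        · exact h2 hu
      simp only [flipEnv, if_neg hnb, spinProd_mk, flipOn, if_pos hu, if_pos hv]
      ring
    · have hb : s(u, v) ∈ edgeBdry G A := hmem.mpr (Or.inl ⟨hu, hv⟩)
      simp only [flipEnv, if_pos hb, spinProd_mk, flipOn, if_pos hu, if_neg hv]
      ring
    · have hb : s(u, v) ∈ edgeBdry G A := hmem.mpr (Or.inr ⟨hv, hu⟩)
      simp only [flipEnv, if_pos hb, spinProd_mk, flipOn, if_neg hu, if_pos hv]
      ring
    · have hnb : s(u, v) ∉ edgeBdry G A := fun hx => by
        rcases hmem.mp hx with ⟨h1, _⟩ | ⟨h1, _⟩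
        · exact hu h1
        · exact hv h1
      simp only [flipEnv, if_neg hnb, spinProd_mk, flipOn, if_neg hu, if_neg hv]

lemma isConfig_flipOn {σ : V → ℝ} (A : Finset V) (h : IsConfig σ) : IsConfig (flipOn A σ) := by
  intro v
  by_cases hv : v ∈ A <;> rcases h v with h1 | h1 <;> simp [flipOn, hv, h1]

lemma flipOn_flipOn (A : Finset V) (σ : V → ℝ) : flipOn A (flipOn A σ) = σ := by
  funext v
  by_cases hv : v ∈ A <;> simp [flipOn, hv]

lemma satisfiesBC_flipOn {B : Finset V} {γ σ : V → ℝ} (A : Finset V)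
    (hAB : ∀ b ∈ B, b ∉ A) (h : SatisfiesBC B γ σ) : SatisfiesBC B γ (flipOn A σ) := by
  intro b hb
  simp only [flipOn, if_neg (hAB b hb)]
  exact h b hb

lemma isGroundState_flip {G : SimpleGraph V} [DecidableRel G.Adj] {B : Finset V} {γ : V → ℝ}
    (A : Finset V) (hAB : ∀ b ∈ B, b ∉ A) {J : Env V} {σ : V → ℝ}
    (h : IsGroundState G B γ J σ) :
    IsGroundState G B γ (flipEnv (edgeBdry G A) J) (flipOn A σ) := by
  obtain ⟨hc, hbc, hmin⟩ := h
  refine ⟨isConfig_flipOn A hc, satisfiesBC_flipOn A hAB hbc, ?_⟩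
  intro τ hτc hτb
  rw [ham_flip]
  have h2 : ham G (flipEnv (edgeBdry G A) J) τ = ham G J (flipOn A τ) := by
    conv_lhs => rw [← flipOn_flipOn A τ]
    rw [ham_flip]
  rw [h2]
  exact hmin _ (isConfig_flipOn A hτc) (satisfiesBC_flipOn A hAB hτb)

lemma config_mul_self {σ : V → ℝ} (h : IsConfig σ) (v : V) : σ v * σ v = 1 := by
  rcases h v with h1 | h1 <;> rw [h1] <;> norm_num

lemma walk_spin_prod {G : SimpleGraph V} [DecidableRel G.Adj] {σ τ : V → ℝ}
    (hσ : IsConfig σ) (hτ : IsConfig τ)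
    (h : ∀ e ∈ G.edgeFinset, spinProd σ e = spinProd τ e)
    {u v : V} (w : G.Walk u v) : σ u * σ v = τ u * τ v := by
  induction w with
  | nil => rw [config_mul_self hσ, config_mul_self hτ]
  | @cons a b c hadj p ih =>
    have he : s(a, b) ∈ G.edgeFinset := by
      rw [SimpleGraph.mem_edgeFinset]
      exact hadj
    have h1 : σ a * σ b = τ a * τ b := by
      have := h _ he
      simpa [spinProd_mk] using this
    calc σ a * σ c = (σ a * σ b) * (σ b * σ c) := by
          rw [show (σ a * σ b) * (σ b * σ c) = σ a * (σ b * σ b) * σ c by ring,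
            config_mul_self hσ]; ring
    _ = (τ a * τ b) * (τ b * τ c) := by rw [h1, ih]
    _ = τ a * τ c := by
          rw [show (τ a * τ b) * (τ b * τ c) = τ a * (τ b * τ b) * τ c by ring,
            config_mul_self hτ]; ring

/-- `Good J`: all ground states for `J` give the same correlation `σ i * σ j`. -/
def Good (G : SimpleGraph V) [DecidableRel G.Adj] (B : Finset V) (γ : V → ℝ) (i j : V)
    (J : Env V) : Prop :=
  ∀ σ τ : V → ℝ, IsGroundState G B γ J σ → IsGroundState G B γ J τ → σ i * σ j = τ i * τ j

lemma measurable_ham (G : SimpleGraph V) [DecidableRel G.Adj] (σ : V → ℝ) :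
    Measurable fun J : Env V => ham G J σ := by
  unfold ham
  exact (Finset.measurable_sum _ fun e _ => (measurable_pi_apply e).mul_const _).neg

lemma bad_null (G : SimpleGraph V) [DecidableRel G.Adj] (B : Finset V) (γ : V → ℝ)
    (hconn : G.Connected) (i j : V) :
    ∃ N : Set (Env V), MeasurableSet N ∧ gaussEnv V N = 0 ∧
      ∀ J ∉ N, Good G B γ i j J := by
  classical
  refine ⟨⋃ s : V → Bool, ⋃ t : V → Bool,
    if (∃ e ∈ G.edgeFinset, spinProd (toSpin s) e ≠ spinProd (toSpin t) e)
    then {J : Env V | ham G J (toSpin s) = ham G J (toSpin t)} else ∅, ?_, ?_, ?_⟩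
  · refine MeasurableSet.iUnion fun s => MeasurableSet.iUnion fun t => ?_
    by_cases hst : ∃ e ∈ G.edgeFinset, spinProd (toSpin s) e ≠ spinProd (toSpin t) e
    · rw [if_pos hst]
      exact measurableSet_eq_fun (measurable_ham G _) (measurable_ham G _)
    · rw [if_neg hst]; exact MeasurableSet.empty
  · refine measure_iUnion_null fun s => measure_iUnion_null fun t => ?_
    by_cases hst : ∃ e ∈ G.edgeFinset, spinProd (toSpin s) e ≠ spinProd (toSpin t) e
    · rw [if_pos hst]
      obtain ⟨e0, he0, hne0⟩ := hst
      have hset : {J : Env V | ham G J (toSpin s) = ham G J (toSpin t)} =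
          {J : Env V | ∑ e ∈ G.edgeFinset,
            (spinProd (toSpin s) e - spinProd (toSpin t) e) * J e = 0} := by
        ext J
        simp only [Set.mem_setOf_eq, ham, neg_inj]
        rw [← sub_eq_zero, ← Finset.sum_sub_distrib]
        constructor
        · intro h; rw [← h]; exact Finset.sum_congr rfl fun e _ => by ring
        · intro h; rw [← h]; exact Finset.sum_congr rfl fun e _ => by ring
      rw [hset]
      exact gauss_null_hyperplane _ 0 _ e0 he0 (sub_ne_zero.mpr hne0)
    · rw [if_neg hst]; simp
  · intro J hJ σ τ hσ hτ
    by_contra hne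
    apply hJ
    obtain ⟨s, hs⟩ := exists_toSpin hσ.1
    obtain ⟨t, ht⟩ := exists_toSpin hτ.1
    have hP : ∃ e ∈ G.edgeFinset, spinProd (toSpin s) e ≠ spinProd (toSpin t) e := by
      rw [hs, ht]
      by_contra hall
      push_neg at hall
      obtain ⟨w⟩ := hconn.preconnected i j
      exact hne (walk_spin_prod hσ.1 hτ.1 hall w)
    have hham : ham G J (toSpin s) = ham G J (toSpin t) := by
      rw [hs, ht]
      exact le_antisymm (hσ.2.2 τ hτ.1 hτ.2.1) (hτ.2.2 σ hσ.1 hσ.2.1)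
    exact Set.mem_iUnion.mpr ⟨s, Set.mem_iUnion.mpr ⟨t, by rw [if_pos hP]; exact hham⟩⟩

/-- Core lemma: if the Hermite coefficient is nonzero, every admissible flip set meets `E(n)`. -/
lemma bdry_hit (G : SimpleGraph V) [DecidableRel G.Adj] (B : Finset V) (γ : V → ℝ)
    (hconn : G.Connected) (i j : V)
    (gs : Env V → V → ℝ) (hgs : ∀ J, IsGroundState G B γ J (gs J))
    (n : Sym2 V → ℕ)
    (hne : (∫ J, gs J i * gs J j * hermiteProd G n J ∂(gaussEnv V)) ≠ 0)
    (A : Finset V) (hiA : i ∈ A) (hjA : j ∉ A) (hAB : ∀ b ∈ B, b ∉ A) :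
    ∃ e ∈ suppEdges G n, e ∈ edgeBdry G A := by
  classical
  by_contra hcon
  push_neg at hcon
  apply hne
  set F := edgeBdry G A with hF
  set f : Env V → ℝ := fun J => gs J i * gs J j * hermiteProd G n J with hf
  have hn0 : ∀ e ∈ F, n e = 0 := by
    intro e heF
    by_contra h0
    have heE : e ∈ G.edgeFinset := (Finset.mem_filter.mp heF).1
    exact hcon e (Finset.mem_filter.mpr ⟨heE, Nat.pos_of_ne_zero h0⟩) heF
  have hherm : ∀ J, hermiteProd G n (flipEnv F J) = hermiteProd G n J := by
    intro J
    unfold hermiteProd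
    refine Finset.prod_congr rfl fun e _ => ?_
    by_cases heF : e ∈ F
    · rw [hn0 e heF]
      simp [hermiteFn, Polynomial.hermite_zero]
    · simp [flipEnv, heF]
  obtain ⟨N, hNmeas, hNnull, hNgood⟩ := bad_null G B γ hconn i j
  have hpre : gaussEnv V (flipEnv F ⁻¹' N) = 0 := by
    rw [(measurePreserving_flipEnv F).measure_preimage hNmeas.nullMeasurableSet]
    exact hNnull
  have haeN : ∀ᵐ J ∂(gaussEnv V), flipEnv F J ∉ N := by
    rw [ae_iff]
    simpa using (show gaussEnv V {a | flipEnv F a ∈ N} = 0 from hpre)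
  have hae : (fun J => f (flipEnv F J)) =ᵐ[gaussEnv V] (fun J => -f J) := by
    filter_upwards [haeN] with J hJ
    have hgood := hNgood _ hJ
    have h2 : IsGroundState G B γ (flipEnv F J) (flipOn A (gs J)) :=
      isGroundState_flip A hAB (hgs J)
    have h3 := hgood _ _ (hgs (flipEnv F J)) h2
    simp only [hf]
    rw [h3, hherm]
    simp only [flipOn, if_pos hiA, if_neg hjA]
    ring
  have hsub := integral_flipEnv F f
  rw [integral_congr_ae hae, integral_neg] at hsub
  linarith [hsub]

/-- Ball of radius `k` around `i` in graph distance. -/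
noncomputable def ball (G : SimpleGraph V) (i : V) (k : ℕ) : Finset V :=
  univ.filter fun v => G.dist i v ≤ k

lemma mem_ball {G : SimpleGraph V} {i v : V} {k : ℕ} : v ∈ ball G i k ↔ G.dist i v ≤ k := by
  simp [ball]

lemma edgeBdry_ball_spec {G : SimpleGraph V} [DecidableRel G.Adj] (hconn : G.Connected)
    {i : V} {k : ℕ} {e : Sym2 V} (he : e ∈ edgeBdry G (ball G i k)) :
    ∃ u v, e = s(u, v) ∧ G.dist i u = k ∧ G.dist i v = k + 1 := by
  classical
  obtain ⟨heE, x, hxe, y, hye, hxA, hyA⟩ := Finset.mem_filter.mp he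
  have hxy : x ≠ y := fun h => hyA (h ▸ hxA)
  have hexy : e = s(x, y) := (Sym2.mem_and_mem_iff hxy).mp ⟨hxe, hye⟩
  have hadj : G.Adj x y := by
    rw [← SimpleGraph.mem_edgeSet, ← hexy]
    exact SimpleGraph.mem_edgeFinset.mp heE
  have hdx : G.dist i x ≤ k := mem_ball.mp hxA
  have hdy : k + 1 ≤ G.dist i y := by
    have := mem_ball.not.mp hyA
    omega
  have hxy1 : G.dist x y ≤ 1 := by
    have := SimpleGraph.dist_le hadj.toWalk
    simpa using this
  have htri : G.dist i y ≤ G.dist i x + G.dist x y := hconn.dist_triangle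
  have htri2 : G.dist i x ≤ G.dist i y + G.dist y x := hconn.dist_triangle
  have hyx1 : G.dist y x ≤ 1 := by rwa [SimpleGraph.dist_comm] at hxy1
  exact ⟨x, y, hexy, by omega, by omega⟩

lemma edgeBdry_ball_level {G : SimpleGraph V} [DecidableRel G.Adj] (hconn : G.Connected)
    {i : V} {k l : ℕ} {e : Sym2 V} (hk : e ∈ edgeBdry G (ball G i k))
    (hl : e ∈ edgeBdry G (ball G i l)) : k = l := by
  obtain ⟨u, v, rfl, h1, h2⟩ := edgeBdry_ball_spec hconn hk
  obtain ⟨u', v', heq, h3, h4⟩ := edgeBdry_ball_spec hconn hl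
  rcases Sym2.eq_iff.mp heq with ⟨rfl, rfl⟩ | ⟨rfl, rfl⟩ <;> omega

lemma edgeBdry_ball_cross {G : SimpleGraph V} [DecidableRel G.Adj] (hconn : G.Connected)
    {i j : V} {k l : ℕ} {e : Sym2 V} (hk : e ∈ edgeBdry G (ball G i k))
    (hl : e ∈ edgeBdry G (ball G j l)) : G.dist i j ≤ k + l + 1 := by
  obtain ⟨u, v, rfl, h1, h2⟩ := edgeBdry_ball_spec hconn hk
  obtain ⟨u', v', heq, h3, h4⟩ := edgeBdry_ball_spec hconn hl
  have htri : G.dist i j ≤ G.dist i u + G.dist u j := hconn.dist_triangle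
  have hcomm : G.dist u j = G.dist j u := SimpleGraph.dist_comm
  rcases Sym2.eq_iff.mp heq with ⟨rfl, rfl⟩ | ⟨rfl, rfl⟩ <;> omega

lemma count_lemma (G : SimpleGraph V) [DecidableRel G.Adj] (hconn : G.Connected)
    (i j : V) (n : Sym2 V → ℕ) (kmax lmax : ℕ)
    (hd : kmax + lmax ≤ G.dist i j)
    (hI : ∀ k < kmax, ∃ e ∈ suppEdges G n, e ∈ edgeBdry G (ball G i k))
    (hJ : ∀ l < lmax, ∃ e ∈ suppEdges G n, e ∈ edgeBdry G (ball G j l)) :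
    kmax + lmax ≤ (suppEdges G n).card := by
  classical
  have hI' : ∀ k : ℕ, ∃ e : Sym2 V, k < kmax →
      e ∈ suppEdges G n ∧ e ∈ edgeBdry G (ball G i k) := by
    intro k
    by_cases h : k < kmax
    · obtain ⟨e, h1, h2⟩ := hI k h
      exact ⟨e, fun _ => ⟨h1, h2⟩⟩
    · exact ⟨s(i, i), fun h' => absurd h' h⟩
  have hJ' : ∀ l : ℕ, ∃ e : Sym2 V, l < lmax →
      e ∈ suppEdges G n ∧ e ∈ edgeBdry G (ball G j l) := by
    intro l
    by_cases h : l < lmax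
    · obtain ⟨e, h1, h2⟩ := hJ l h
      exact ⟨e, fun _ => ⟨h1, h2⟩⟩
    · exact ⟨s(i, i), fun h' => absurd h' h⟩
  choose eI heI using hI'
  choose eJ heJ using hJ'
  have hIinj : Set.InjOn eI (Finset.range kmax) := by
    intro k hk l hl hkl
    simp only [Finset.coe_range, Set.mem_Iio] at hk hl
    exact edgeBdry_ball_level hconn ((hkl ▸ (heI k hk).2)) ((heI l hl).2)
  have hJinj : Set.InjOn eJ (Finset.range lmax) := by
    intro k hk l hl hkl
    simp only [Finset.coe_range, Set.mem_Iio] at hk hl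
    exact edgeBdry_ball_level hconn ((hkl ▸ (heJ k hk).2)) ((heJ l hl).2)
  set S1 := (Finset.range kmax).image eI with hS1
  set S2 := (Finset.range lmax).image eJ with hS2
  have hdisj : Disjoint S1 S2 := by
    rw [Finset.disjoint_left]
    intro e he1 he2
    obtain ⟨k, hk, rfl⟩ := Finset.mem_image.mp he1
    obtain ⟨l, hl, hle⟩ := Finset.mem_image.mp he2
    rw [Finset.mem_range] at hk hl
    have hcross := edgeBdry_ball_cross hconn (heI k hk).2 (hle ▸ (heJ l hl).2)
    omega
  have hsub : S1 ∪ S2 ⊆ suppEdges G n := by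
    intro e he
    rcases Finset.mem_union.mp he with h | h
    · obtain ⟨k, hk, rfl⟩ := Finset.mem_image.mp h
      exact (heI k (Finset.mem_range.mp hk)).1
    · obtain ⟨l, hl, rfl⟩ := Finset.mem_image.mp h
      exact (heJ l (Finset.mem_range.mp hl)).1
  calc kmax + lmax = S1.card + S2.card := by
        rw [hS1, hS2, Finset.card_image_of_injOn hIinj, Finset.card_image_of_injOn hJinj,
          Finset.card_range, Finset.card_range]
  _ = (S1 ∪ S2).card := (Finset.card_union_of_disjoint hdisj).symm
  _ ≤ (suppEdges G n).card := Finset.card_le_card hsub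

end Aux

/-- Corollary 2.2: if the Hermite coefficient `φ̂(n)` of
`φ(J) = σ_i σ_j` is nonzero then `|E(n)| ≥ min{d(i,j), d(i,B)+d(j,B)}`. -/
theorem hermite_coefficient_degree (V : Type) [Fintype V] [DecidableEq V]
    (G : SimpleGraph V) [DecidableRel G.Adj] (B : Finset V) (γ : V → ℝ)
    (hconn : G.Connected) (hE : 2 ≤ G.edgeFinset.card)
    (hVo : (univ \ B).Nonempty)
    (hVoconn : (G.induce ((univ \ B : Finset V) : Set V)).Connected)
    (i j : V) (hi : i ∈ univ \ B) (hj : j ∈ univ \ B) (hij : i ≠ j)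
    (gs : Env V → V → ℝ) (hgs : ∀ J, IsGroundState G B γ J (gs J))
    (n : Sym2 V → ℕ)
    (hne : (∫ J, gs J i * gs J j * hermiteProd G n J ∂(gaussEnv V)) ≠ 0) :
    minDist G B i j ≤ (suppEdges G n).card := by
  classical
  set d := G.dist i j with hd
  have hne' : (∫ J, gs J j * gs J i * hermiteProd G n J ∂(gaussEnv V)) ≠ 0 := by
    have heq : (fun J => gs J j * gs J i * hermiteProd G n J)
        = fun J => gs J i * gs J j * hermiteProd G n J := by
      funext J; ring
    rw [heq]; exact hne
  have hitI : ∀ k : ℕ, k < d → (∀ b ∈ B, k < G.dist i b) →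
      ∃ e ∈ suppEdges G n, e ∈ edgeBdry G (ball G i k) := by
    intro k hk hkB
    refine bdry_hit G B γ hconn i j gs hgs n hne (ball G i k) ?_ ?_ ?_
    · exact mem_ball.mpr (by simp [SimpleGraph.dist_self])
    · rw [mem_ball]; omega
    · intro b hb hbmem
      have h1 := mem_ball.mp hbmem
      have h2 := hkB b hb
      omega
  have hitJ : ∀ l : ℕ, l < d → (∀ b ∈ B, l < G.dist j b) →
      ∃ e ∈ suppEdges G n, e ∈ edgeBdry G (ball G j l) := by
    intro l hl hlB
    refine bdry_hit G B γ hconn j i gs hgs n hne' (ball G j l) ?_ ?_ ?_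
    · exact mem_ball.mpr (by simp [SimpleGraph.dist_self])
    · rw [mem_ball]
      have hcomm : G.dist j i = d := by rw [hd]; exact SimpleGraph.dist_comm
      omega
    · intro b hb hbmem
      have h1 := mem_ball.mp hbmem
      have h2 := hlB b hb
      omega
  by_cases hB : B.Nonempty
  · set dI := B.inf' hB (fun k => G.dist i k) with hdI
    set dJ := B.inf' hB (fun k => G.dist j k) with hdJ
    set m := min d (dI + dJ) with hm
    set kmax := min dI d with hkmax
    set lmax := m - kmax with hlmax
    have hmd : m ≤ d := min_le_left _ _
    have hmIJ : m ≤ dI + dJ := min_le_right _ _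
    have hkI : kmax ≤ dI := min_le_left _ _
    have hkd : kmax ≤ d := min_le_right _ _
    have hkcases : kmax = dI ∨ kmax = d := by
      rcases le_total dI d with h | h
      · left; rw [hkmax]; exact min_eq_left h
      · right; rw [hkmax]; exact min_eq_right h
    have hkm : kmax ≤ m := by
      rcases le_total dI d with h | h
      · have : kmax = dI := by rw [hkmax]; exact min_eq_left h
        omega
      · have : kmax = d := by rw [hkmax]; exact min_eq_right h
        omega
    have hIB : ∀ b ∈ B, dI ≤ G.dist i b := fun b hb => Finset.inf'_le _ hb
    have hJB : ∀ b ∈ B, dJ ≤ G.dist j b := fun b hb => Finset.inf'_le _ hb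
    have hlJ : lmax ≤ dJ := by omega
    have hcount := count_lemma G hconn i j n kmax lmax (by omega)
      (fun k hk => hitI k (by omega) (fun b hb => by have := hIB b hb; omega))
      (fun l hl => hitJ l (by omega) (fun b hb => by have := hJB b hb; omega))
    have hgoal : minDist G B i j = m := by
      rw [minDist, dif_pos hB]
    rw [hgoal]
    omega
  · have hcount := count_lemma G hconn i j n d 0 (by omega)
      (fun k hk => hitI k hk (fun b hb => absurd ⟨b, hb⟩ hB))
      (fun l hl => absurd hl (by omega))
    have hgoal : minDist G B i j = d := by
      rw [minDist, dif_neg hB]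
    rw [hgoal]
    omega

end EA
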